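/- Let V be an N_K=N SUSY vertex algebra and M a V-module, with Li filtration E_n(M). For every a ∈ V, l, n ∈ ℤ and L ⊂ [N] one has a_{(l|L)} E_n(M) ⊆ E_{n−l−1}(M); and if moreover l ≥ 0, then a_{(l|L)} E_n(M) ⊆ E_{n−l}(M). -/

import Mathlib

open Finset
open scoped DirectSum

namespace SUSY

/-- The sign `(-1)^x` attached to a parity `x : ZMod 2`. -/
def sg (x : ZMod 2) : ℤ := if x = 0 then 1 else -1

/-- The reordering sign `σ(I,J)` (equal to `0` when `I` and `J` are not disjoint). -/
def ssgn {N : ℕ} (I J : Finset (Fin N)) : ℤ :=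
  if Disjoint I J then (-1) ^ (((I ×ˢ J).filter fun p => p.2 < p.1).card) else 0

/-- The generalized binomial coefficient `x(x-1)⋯(x-j+1)/j!` in a field `𝕜`. -/
noncomputable def dchoose (𝕜 : Type) [Field 𝕜] (x : ℤ) (j : ℕ) : 𝕜 :=
  (∏ i ∈ Finset.range j, ((x : 𝕜) - (i : 𝕜))) / (j.factorial : 𝕜)

/-- Ordered product `S^{l₁} ∘ ⋯ ∘ S^{l_r}` over an ordered subset `L = {l₁ < ⋯ < l_r}`. -/
def sProd {𝕜 : Type} [Field 𝕜] {V : Type} [AddCommGroup V] [Module 𝕜 V] {N : ℕ}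
    (S : Fin N → Module.End 𝕜 V) (L : Finset (Fin N)) : Module.End 𝕜 V :=
  ((L.sort (· ≤ ·)).map S).prod

section Gr

variable {𝕜 : Type} [Field 𝕜] {V : Type} [AddCommGroup V] [Module 𝕜 V]

/-- For a filtration `E`, the quotient `E n / E (n+1)`. -/
abbrev grQuot (E : ℤ → Submodule 𝕜 V) (n : ℕ) : Type :=
  ↥(E (n : ℤ)) ⧸ Submodule.comap (E (n : ℤ)).subtype (E ((n : ℤ) + 1))

/-- The associated graded space `⨁ₙ E n / E (n+1)` of a filtration `E`. -/
abbrev GrLi (E : ℤ → Submodule 𝕜 V) : Type := ⨁ n : ℕ, grQuot E n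

/-- The class of an element `a ∈ E n` in the degree `n` component `E n / E (n+1)`
of the associated graded space. -/
noncomputable def grCls (E : ℤ → Submodule 𝕜 V) (n : ℕ) (a : V) (h : a ∈ E (n : ℤ)) :
    GrLi E :=
  DirectSum.of (fun m : ℕ => grQuot E m) n (Submodule.Quotient.mk ⟨a, h⟩)

end Gr

/-- A supercommutative superalgebra structure on a (possibly noncommutative) ring `A`. -/
structure SuperRing (𝕜 : Type) [CommRing 𝕜] (A : Type) [Ring A] [Algebra 𝕜 A] : Type where
  gr : ZMod 2 → Submodule 𝕜 A
  decomp : DirectSum.Decomposition gr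
  one_mem : (1 : A) ∈ gr 0
  mul_mem : ∀ (p q : ZMod 2) (x y : A), x ∈ gr p → y ∈ gr q → x * y ∈ gr (p + q)
  scomm : ∀ (p q : ZMod 2) (x y : A), x ∈ gr p → y ∈ gr q → x * y = sg (p * q) • (y * x)

/-- An even derivation of a superalgebra. -/
structure EvenDer (𝕜 : Type) [CommRing 𝕜] (A : Type) [Ring A] [Algebra 𝕜 A]
    (SA : SuperRing 𝕜 A) : Type where
  D : A →ₗ[𝕜] A
  even : ∀ (p : ZMod 2), ∀ x ∈ SA.gr p, D x ∈ SA.gr p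
  leibniz : ∀ x y : A, D (x * y) = D x * y + x * D y

/-- An odd derivation of a superalgebra. -/
structure OddDer (𝕜 : Type) [CommRing 𝕜] (A : Type) [Ring A] [Algebra 𝕜 A]
    (SA : SuperRing 𝕜 A) : Type where
  D : A →ₗ[𝕜] A
  odd : ∀ (p : ZMod 2), ∀ x ∈ SA.gr p, D x ∈ SA.gr (p + 1)
  leibniz : ∀ (p : ZMod 2) (x y : A), x ∈ SA.gr p →
    D (x * y) = D x * y + sg p • (x * D y)

/-- The structure of a Poisson superalgebra of parity `qpar` on a `𝕜`-module `Q`: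
a unital supercommutative multiplication together with a Poisson bracket of parity
`qpar` satisfying super skew-symmetry, the (parity-shifted) Jacobi identity and
the Leibniz rule. -/
structure PoissonSuperAlgStruct (𝕜 : Type) [Field 𝕜] (Q : Type) [AddCommGroup Q]
    [Module 𝕜 Q] (qpar : ZMod 2) : Type where
  gr : ZMod 2 → Submodule 𝕜 Q
  decomp : DirectSum.Decomposition gr
  mul : Q →ₗ[𝕜] Q →ₗ[𝕜] Q
  one : Q
  br : Q →ₗ[𝕜] Q →ₗ[𝕜] Q
  one_even : one ∈ gr 0
  mul_mem : ∀ (p q : ZMod 2) (x y : Q), x ∈ gr p → y ∈ gr q → mul x y ∈ gr (p + q)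
  br_mem : ∀ (p q : ZMod 2) (x y : Q), x ∈ gr p → y ∈ gr q → br x y ∈ gr (p + q + qpar)
  mul_assoc' : ∀ x y z : Q, mul (mul x y) z = mul x (mul y z)
  mul_scomm : ∀ (p q : ZMod 2) (x y : Q), x ∈ gr p → y ∈ gr q →
    mul x y = sg (p * q) • mul y x
  one_mul' : ∀ x : Q, mul one x = x
  br_skew : ∀ (p q : ZMod 2) (x y : Q), x ∈ gr p → y ∈ gr q →
    br x y = (-sg (p * q + qpar)) • br y x
  br_jacobi : ∀ (p q r : ZMod 2) (x y z : Q), x ∈ gr p → y ∈ gr q → z ∈ gr r →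
    br x (br y z)
      = (-sg (p * qpar + qpar)) • br (br x y) z
        + sg ((p + qpar) * (q + qpar)) • br y (br x z)
  leibniz : ∀ (p q : ZMod 2) (x y z : Q), x ∈ gr p → y ∈ gr q →
    br x (mul y z) = mul (br x y) z + sg ((p + qpar) * q) • mul y (br x z)
section Structures
variable (𝕜 : Type) [Field 𝕜] [CharZero 𝕜] (N : ℕ)
variable (V : Type) [AddCommGroup V] [Module 𝕜 V]

/-- An `N_W = N` SUSY vertex algebra, described through the Fourier modes
`a_(j|J)` of the state-superfield correspondence
`Y(a,Z) = ∑ Z^(-1-j | [N]∖J) a_(j|J)`. -/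
structure NWSusyVA : Type where
  gr : ZMod 2 → Submodule 𝕜 V
  decomp : DirectSum.Decomposition gr
  vac : V
  T : Module.End 𝕜 V
  S : Fin N → Module.End 𝕜 V
  mode : V →ₗ[𝕜] ℤ → Finset (Fin N) → Module.End 𝕜 V
  mode_trunc : ∀ (a v : V), ∃ n : ℕ, ∀ j : ℤ, (n : ℤ) ≤ j → ∀ J, mode a j J v = 0
  vac_even : vac ∈ gr 0
  T_even : ∀ (p : ZMod 2), ∀ x ∈ gr p, T x ∈ gr p
  S_odd : ∀ (i : Fin N) (p : ZMod 2), ∀ x ∈ gr p, S i x ∈ gr (p + 1)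
  mode_parity : ∀ (pa pv : ZMod 2) (a v : V) (j : ℤ) (J : Finset (Fin N)),
    a ∈ gr pa → v ∈ gr pv →
    mode a j J v ∈ gr (pa + pv + (N : ZMod 2) + (J.card : ZMod 2))
  mode_vac : ∀ a : V, mode a (-1) Finset.univ vac = a
  mode_vac_nonneg : ∀ (a : V) (j : ℤ), 0 ≤ j → ∀ J, mode a j J vac = 0
  T_vac : T vac = 0
  S_vac : ∀ i, S i vac = 0
  T_transl : ∀ (a : V) (j : ℤ) (J : Finset (Fin N)),
    T * mode a j J - mode a j J * T = (-j) • mode a (j - 1) J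
  S_transl : ∀ (i : Fin N) (pa : ZMod 2) (a : V), a ∈ gr pa →
    ∀ (j : ℤ) (J : Finset (Fin N)),
    S i * mode a j J
        - sg (pa + (N : ZMod 2) + (J.card : ZMod 2)) • (mode a j J * S i)
      = ssgn (Finset.univ \ J) {i} • mode a j (J.erase i)
  locality : ∀ (pa pb : ZMod 2) (a b : V), a ∈ gr pa → b ∈ gr pb →
    ∃ n : ℕ, ∀ (p q : ℤ) (J K : Finset (Fin N)),
      (∑ i ∈ Finset.range (n + 1),
        ((-1 : ℤ) ^ i * (n.choose i : ℤ)) •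
          (mode a (p + ((n - i : ℕ) : ℤ)) J * mode b (q + (i : ℤ)) K
            - sg ((pa + (N : ZMod 2) + (J.card : ZMod 2)) *
                  (pb + (N : ZMod 2) + (K.card : ZMod 2))) •
              (mode b (q + (i : ℤ)) K * mode a (p + ((n - i : ℕ) : ℤ)) J))) = 0

/-- An `N_K = N` SUSY vertex algebra, described through the Fourier modes
`a_(j|J)` of the state-superfield correspondence. -/
structure NKSusyVA : Type where
  gr : ZMod 2 → Submodule 𝕜 V
  decomp : DirectSum.Decomposition gr
  vac : V
  SK : Fin N → Module.End 𝕜 V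
  mode : V →ₗ[𝕜] ℤ → Finset (Fin N) → Module.End 𝕜 V
  mode_trunc : ∀ (a v : V), ∃ n : ℕ, ∀ j : ℤ, (n : ℤ) ≤ j → ∀ J, mode a j J v = 0
  vac_even : vac ∈ gr 0
  SK_odd : ∀ (i : Fin N) (p : ZMod 2), ∀ x ∈ gr p, SK i x ∈ gr (p + 1)
  mode_parity : ∀ (pa pv : ZMod 2) (a v : V) (j : ℤ) (J : Finset (Fin N)),
    a ∈ gr pa → v ∈ gr pv →
    mode a j J v ∈ gr (pa + pv + (N : ZMod 2) + (J.card : ZMod 2))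
  mode_vac : ∀ a : V, mode a (-1) Finset.univ vac = a
  mode_vac_nonneg : ∀ (a : V) (j : ℤ), 0 ≤ j → ∀ J, mode a j J vac = 0
  SK_vac : ∀ i, SK i vac = 0
  SK_transl : ∀ (i : Fin N) (pa : ZMod 2) (a : V), a ∈ gr pa →
    ∀ (j : ℤ) (J : Finset (Fin N)),
    SK i * mode a j J
        - sg (pa + (N : ZMod 2) + (J.card : ZMod 2)) • (mode a j J * SK i)
      = if i ∈ J then ssgn (Finset.univ \ J) {i} • mode a j (J.erase i)
        else (-j * ssgn (Finset.univ \ insert i J) {i}) • mode a (j - 1) (insert i J)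
  locality : ∀ (pa pb : ZMod 2) (a b : V), a ∈ gr pa → b ∈ gr pb →
    ∃ n : ℕ, ∀ (p q : ℤ) (J K : Finset (Fin N)),
      (∑ i ∈ Finset.range (n + 1),
        ((-1 : ℤ) ^ i * (n.choose i : ℤ)) •
          (mode a (p + ((n - i : ℕ) : ℤ)) J * mode b (q + (i : ℤ)) K
            - sg ((pa + (N : ZMod 2) + (J.card : ZMod 2)) *
                  (pb + (N : ZMod 2) + (K.card : ZMod 2))) •
              (mode b (q + (i : ℤ)) K * mode a (p + ((n - i : ℕ) : ℤ)) J))) = 0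

variable (M : Type) [AddCommGroup M] [Module 𝕜 M]

/-- A module over an `N_W = N` SUSY vertex algebra, given by the Fourier modes of
the superfields `Y^M(a,Z)`, satisfying the standard module axioms (vacuum acting as
the identity, translation invariance, and the Borcherds-type identities, i.e. the
SUSY commutator formula and the SUSY iterate formula hold for the action on `M`). -/
structure NWModule (W : NWSusyVA 𝕜 N V) : Type where
  grM : ZMod 2 → Submodule 𝕜 M
  decompM : DirectSum.Decomposition grM
  amode : V →ₗ[𝕜] ℤ → Finset (Fin N) → Module.End 𝕜 M
  amode_trunc : ∀ (a : V) (m : M), ∃ n : ℕ, ∀ j : ℤ, (n : ℤ) ≤ j → ∀ J, amode a j J m = 0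
  amode_parity : ∀ (pa pm : ZMod 2) (a : V) (m : M) (j : ℤ) (J : Finset (Fin N)),
    a ∈ W.gr pa → m ∈ grM pm →
    amode a j J m ∈ grM (pa + pm + (N : ZMod 2) + (J.card : ZMod 2))
  vac_act : ∀ (j : ℤ) (J : Finset (Fin N)),
    amode W.vac j J = if j = -1 ∧ J = Finset.univ then 1 else 0
  T_act : ∀ (a : V) (j : ℤ) (J : Finset (Fin N)),
    amode (W.T a) j J = (-j) • amode a (j - 1) J
  S_act : ∀ (i : Fin N) (a : V) (j : ℤ) (J : Finset (Fin N)),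
    amode (W.S i a) j J = ssgn {i} (Finset.univ \ J) • amode a j (J.erase i)
  comm_formula : ∀ (pa pb : ZMod 2) (a b : V), a ∈ W.gr pa → b ∈ W.gr pb →
    ∀ (l m : ℤ) (L M' : Finset (Fin N)) (u : M),
    amode a l L (amode b m M' u)
        - sg ((pa + (N : ZMod 2) + (L.card : ZMod 2)) *
              (pb + (N : ZMod 2) + (M'.card : ZMod 2))) •
            amode b m M' (amode a l L u)
      = ∑ᶠ j : ℕ, ∑ J : Finset (Fin N),
          if L ∩ M' ⊆ J then
            (((sg ((pa + (N : ZMod 2) + (L.card : ZMod 2)) *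
                     ((N : ZMod 2) + (M'.card : ZMod 2))
                   + ((L.card : ZMod 2) + (J.card : ZMod 2)) *
                     ((N : ZMod 2) + (J.card : ZMod 2)))
                * (ssgn J (Finset.univ \ J) * ssgn L (Finset.univ \ L) * ssgn J (L \ J)
                    * ssgn (L \ J) ((Finset.univ \ M') \ (L \ J))) : ℤ) : 𝕜)
              * dchoose 𝕜 l j) •
            amode (W.mode a (j : ℤ) J b) (l + m - (j : ℤ)) (M' ∪ (L \ J)) u
          else 0
  iterate_formula : ∀ (pa pb : ZMod 2) (a b : V), a ∈ W.gr pa → b ∈ W.gr pb →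
    ∀ (k l : ℤ) (K L : Finset (Fin N)) (u : M),
    amode (W.mode a k K b) l L u
      = ∑ᶠ j : ℕ, ∑ J ∈ K.powerset,
          (((sg ((j : ZMod 2)
                 + ((K \ J).card : ZMod 2) * (1 + ((Finset.univ \ J).card : ZMod 2)))
              * (ssgn J (K \ J) * ssgn J (Finset.univ \ J) * ssgn L (K \ J)
                  * ssgn (L ∪ (K \ J)) (Finset.univ \ (L ∪ (K \ J)))) : ℤ) : 𝕜)
            * dchoose 𝕜 k j) •
          (sg ((pa + (N : ZMod 2) + (J.card : ZMod 2)) *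
                ((Finset.univ \ (L ∪ (K \ J))).card : ZMod 2)) •
              amode a (k - (j : ℤ)) J (amode b (l + (j : ℤ)) (L ∪ (K \ J)) u)
            - sg ((k : ZMod 2) + pa * pb
                  + (pb + (N : ZMod 2) + (J.card : ZMod 2)) *
                    ((Finset.univ \ (L ∪ (K \ J))).card : ZMod 2)) •
              amode b (k + l - (j : ℤ)) (L ∪ (K \ J)) (amode a (j : ℤ) J u))

/-- A module over an `N_K = N` SUSY vertex algebra. -/
structure NKModule (W : NKSusyVA 𝕜 N V) : Type where
  grM : ZMod 2 → Submodule 𝕜 M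
  decompM : DirectSum.Decomposition grM
  amode : V →ₗ[𝕜] ℤ → Finset (Fin N) → Module.End 𝕜 M
  amode_trunc : ∀ (a : V) (m : M), ∃ n : ℕ, ∀ j : ℤ, (n : ℤ) ≤ j → ∀ J, amode a j J m = 0
  amode_parity : ∀ (pa pm : ZMod 2) (a : V) (m : M) (j : ℤ) (J : Finset (Fin N)),
    a ∈ W.gr pa → m ∈ grM pm →
    amode a j J m ∈ grM (pa + pm + (N : ZMod 2) + (J.card : ZMod 2))
  vac_act : ∀ (j : ℤ) (J : Finset (Fin N)),
    amode W.vac j J = if j = -1 ∧ J = Finset.univ then 1 else 0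
  SK_act : ∀ (i : Fin N) (a : V) (j : ℤ) (J : Finset (Fin N)),
    amode (W.SK i a) j J
      = if i ∈ J then ssgn (Finset.univ \ J) {i} • amode a j (J.erase i)
        else (-j * ssgn (Finset.univ \ insert i J) {i}) • amode a (j - 1) (insert i J)
  comm_formula : ∀ (pa pb : ZMod 2) (a b : V), a ∈ W.gr pa → b ∈ W.gr pb →
    ∀ (l m : ℤ) (L M' : Finset (Fin N)) (u : M),
    amode a l L (amode b m M' u)
        - sg ((pa + (N : ZMod 2) + (L.card : ZMod 2)) *
              (pb + (N : ZMod 2) + (M'.card : ZMod 2))) •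
            amode b m M' (amode a l L u)
      = ∑ᶠ j : ℕ, ∑ J : Finset (Fin N),
          if M' ∩ ((J \ L) ∪ (L \ J)) = ∅ then
            (((sg ((pa + (N : ZMod 2) + (L.card : ZMod 2)) *
                     ((N : ZMod 2) + (M'.card : ZMod 2))
                   + (J.card : ZMod 2) * ((N : ZMod 2) + (L.card : ZMod 2))
                   + (L.card : ZMod 2) * (N : ZMod 2)
                   + (((J ∩ L).card.choose 2 : ℕ) : ZMod 2)
                   + (((J.card + 1).choose 2 : ℕ) : ZMod 2))
                * (ssgn ((J \ L) ∪ (L \ J))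
                      (Finset.univ \ (M' ∪ (J \ L) ∪ (L \ J)))
                    * ssgn J (Finset.univ \ J) * ssgn L (Finset.univ \ L)
                    * ssgn (J \ L) (J ∩ L) * ssgn (J ∩ L) (L \ J)
                    * ssgn (J \ L) (L \ J)) : ℤ) : 𝕜)
              * ((∏ i ∈ Finset.range (j + (J \ L).card), ((l : 𝕜) - (i : 𝕜)))
                  / (j.factorial : 𝕜))) •
            amode (W.mode a (j : ℤ) J b)
              (l + m - (j : ℤ) - ((J \ L).card : ℤ)) (M' ∪ (J \ L) ∪ (L \ J)) u
          else 0
  iterate_formula : ∀ (pa pb : ZMod 2) (a b : V), a ∈ W.gr pa → b ∈ W.gr pb →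
    ∀ (k l : ℤ) (K L : Finset (Fin N)) (w : M),
    amode (W.mode a k K b) l L w
      = ∑ᶠ j : ℕ, ∑ J : Finset (Fin N), ∑ M' ∈ (J ∩ K).powerset,
          (((sg ((j : ZMod 2)
                 + ((((J \ M').card + 1).choose 2 : ℕ) : ZMod 2)
                 + ((J \ M').card : ZMod 2) *
                     ((M'.card : ZMod 2) + ((Finset.univ \ J).card : ZMod 2))
                 + ((K \ M').card : ZMod 2) * (1 + ((Finset.univ \ J).card : ZMod 2))
                 + ((Finset.univ \ J).card : ZMod 2) *
                     ((Finset.univ \ (L ∪ (J \ M') ∪ (K \ M'))).card : ZMod 2))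
              * (ssgn M' (K \ M') * ssgn (J \ M') M' * ssgn J (Finset.univ \ J)
                  * ssgn (J \ M') (K \ M') * ssgn L ((J \ M') ∪ (K \ M'))
                  * ssgn (L ∪ (J \ M') ∪ (K \ M'))
                      (Finset.univ \ (L ∪ (J \ M') ∪ (K \ M')))) : ℤ) : 𝕜)
            * dchoose 𝕜 k j * dchoose 𝕜 (k - (j : ℤ)) ((J \ M').card)) •
          (sg ((pa + (N : ZMod 2) + (J.card : ZMod 2)) *
                ((Finset.univ \ (L ∪ (J \ M') ∪ (K \ M'))).card : ZMod 2)) •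
              amode a (k - (j : ℤ) - ((J \ M').card : ℤ)) J
                (amode b (l + (j : ℤ)) (L ∪ (J \ M') ∪ (K \ M')) w)
            - sg ((k : ZMod 2) + pa * pb
                  + (pb + (N : ZMod 2) + (J.card : ZMod 2)) *
                    ((Finset.univ \ (L ∪ (J \ M') ∪ (K \ M'))).card : ZMod 2)) •
              amode b (l + k - (j : ℤ) - ((J \ M').card : ℤ))
                (L ∪ (J \ M') ∪ (K \ M')) (amode a (j : ℤ) J w))

end Structures
section Defs

variable {𝕜 : Type} [Field 𝕜] [CharZero 𝕜] {N : ℕ}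
variable {V : Type} [AddCommGroup V] [Module 𝕜 V]

/-- Commutativity of a SUSY vertex algebra: all superfields supercommute, i.e.
`[Y(a,Z), Y(b,W)] = 0` for `a`, `b` of pure parity. -/
def NWSusyVA.IsCommutative (W : NWSusyVA 𝕜 N V) : Prop :=
  ∀ (pa pb : ZMod 2) (a b : V), a ∈ W.gr pa → b ∈ W.gr pb →
    ∀ (j m : ℤ) (J M : Finset (Fin N)),
      W.mode a j J * W.mode b m M
        = sg ((pa + (N : ZMod 2) + (J.card : ZMod 2)) *
              (pb + (N : ZMod 2) + (M.card : ZMod 2))) •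
            (W.mode b m M * W.mode a j J)

/-- Commutativity of an `N_K = N` SUSY vertex algebra. -/
def NKSusyVA.IsCommutative (W : NKSusyVA 𝕜 N V) : Prop :=
  ∀ (pa pb : ZMod 2) (a b : V), a ∈ W.gr pa → b ∈ W.gr pb →
    ∀ (j m : ℤ) (J M : Finset (Fin N)),
      W.mode a j J * W.mode b m M
        = sg ((pa + (N : ZMod 2) + (J.card : ZMod 2)) *
              (pb + (N : ZMod 2) + (M.card : ZMod 2))) •
            (W.mode b m M * W.mode a j J)

/-- The normally ordered product `a ⋅ b := a_(-1|[N]) b`. -/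
def NWSusyVA.prod (W : NWSusyVA 𝕜 N V) (a b : V) : V := W.mode a (-1) Finset.univ b

/-- The normally ordered product `a ⋅ b := a_(-1|[N]) b`. -/
def NKSusyVA.prod (W : NKSusyVA 𝕜 N V) (a b : V) : V := W.mode a (-1) Finset.univ b

/-- The Li filtration of an `N_W = N` SUSY vertex algebra:
`E n` is spanned by the elements `a¹_(-1-k₁|K₁) ⋯ a^r_(-1-k_r|K_r) b`
with `r ≥ 1` and `k₁ + ⋯ + k_r ≥ n`. -/
def NWSusyVA.liFil (W : NWSusyVA 𝕜 N V) (n : ℤ) : Submodule 𝕜 V :=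
  Submodule.span 𝕜 {x : V | ∃ (r : ℕ) (a : Fin (r + 1) → V) (k : Fin (r + 1) → ℕ)
      (K : Fin (r + 1) → Finset (Fin N)) (b : V),
      n ≤ ∑ i, (k i : ℤ) ∧
      x = ((List.ofFn fun i => W.mode (a i) (-1 - (k i : ℤ)) (K i)).prod) b}

/-- The Li filtration of an `N_K = N` SUSY vertex algebra. -/
def NKSusyVA.liFil (W : NKSusyVA 𝕜 N V) (n : ℤ) : Submodule 𝕜 V :=
  Submodule.span 𝕜 {x : V | ∃ (r : ℕ) (a : Fin (r + 1) → V) (k : Fin (r + 1) → ℕ)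
      (K : Fin (r + 1) → Finset (Fin N)) (b : V),
      n ≤ ∑ i, (k i : ℤ) ∧
      x = ((List.ofFn fun i => W.mode (a i) (-1 - (k i : ℤ)) (K i)).prod) b}

/-- The subspace `C₂(V) = span{ a_(-j|J) b : j ≥ 2 }`. -/
def NWSusyVA.C2sub (W : NWSusyVA 𝕜 N V) : Submodule 𝕜 V :=
  Submodule.span 𝕜 {x : V | ∃ (a b : V) (j : ℕ) (J : Finset (Fin N)),
    2 ≤ j ∧ x = W.mode a (-(j : ℤ)) J b}

/-- The subspace `C₂(V) = span{ a_(-j|J) b : j ≥ 2 }`. -/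
def NKSusyVA.C2sub (W : NKSusyVA 𝕜 N V) : Submodule 𝕜 V :=
  Submodule.span 𝕜 {x : V | ∃ (a b : V) (j : ℕ) (J : Finset (Fin N)),
    2 ≤ j ∧ x = W.mode a (-(j : ℤ)) J b}

/-- The set of states generated from a set `G` of strong generators. -/
def NWSusyVA.genSet (W : NWSusyVA 𝕜 N V) (G : Finset V) : Set V :=
  {x : V | ∃ (r : ℕ) (a : Fin r → V) (p : Fin r → ℕ) (P : Fin r → Finset (Fin N)),
    (∀ i, a i ∈ G ∧ 1 ≤ p i) ∧
    x = ((List.ofFn fun i => W.mode (a i) (-(p i : ℤ)) (P i)).prod) W.vac}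

/-- The set of states generated from a set `G` of strong generators. -/
def NKSusyVA.genSet (W : NKSusyVA 𝕜 N V) (G : Finset V) : Set V :=
  {x : V | ∃ (r : ℕ) (a : Fin r → V) (p : Fin r → ℕ) (P : Fin r → Finset (Fin N)),
    (∀ i, a i ∈ G ∧ 1 ≤ p i) ∧
    x = ((List.ofFn fun i => W.mode (a i) (-(p i : ℤ)) (P i)).prod) W.vac}

/-- Monomials in a set `G` of generators, with respect to the product
`a ⋅ m = a_(-1|[N]) m` (lifting products of the classes `ā` in `R_V = V/C₂(V)`). -/
inductive NWMon (W : NWSusyVA 𝕜 N V) (G : Finset V) : V → Prop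
  | vac : NWMon W G W.vac
  | step (g : V) (hg : g ∈ G) (m : V) (hm : NWMon W G m) :
      NWMon W G (W.mode g (-1) Finset.univ m)

/-- Monomials in a set `G` of generators, with respect to the product
`a ⋅ m = a_(-1|[N]) m`. -/
inductive NKMon (W : NKSusyVA 𝕜 N V) (G : Finset V) : V → Prop
  | vac : NKMon W G W.vac
  | step (g : V) (hg : g ∈ G) (m : V) (hm : NKMon W G m) :
      NKMon W G (W.mode g (-1) Finset.univ m)

end Defs
section ModDefs

variable {𝕜 : Type} [Field 𝕜] [CharZero 𝕜] {N : ℕ}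
variable {V : Type} [AddCommGroup V] [Module 𝕜 V]
variable {M : Type} [AddCommGroup M] [Module 𝕜 M]

/-- The Li filtration of a module over an `N_W = N` SUSY vertex algebra. -/
def NWModule.liFil {W : NWSusyVA 𝕜 N V} (Ms : NWModule 𝕜 N V M W) (n : ℤ) :
    Submodule 𝕜 M :=
  Submodule.span 𝕜 {x : M | ∃ (r : ℕ) (a : Fin (r + 1) → V) (k : Fin (r + 1) → ℕ)
      (K : Fin (r + 1) → Finset (Fin N)) (m : M),
      n ≤ ∑ i, (k i : ℤ) ∧
      x = ((List.ofFn fun i => Ms.amode (a i) (-1 - (k i : ℤ)) (K i)).prod) m}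

/-- The Li filtration of a module over an `N_K = N` SUSY vertex algebra. -/
def NKModule.liFil {W : NKSusyVA 𝕜 N V} (Ms : NKModule 𝕜 N V M W) (n : ℤ) :
    Submodule 𝕜 M :=
  Submodule.span 𝕜 {x : M | ∃ (r : ℕ) (a : Fin (r + 1) → V) (k : Fin (r + 1) → ℕ)
      (K : Fin (r + 1) → Finset (Fin N)) (m : M),
      n ≤ ∑ i, (k i : ℤ) ∧
      x = ((List.ofFn fun i => Ms.amode (a i) (-1 - (k i : ℤ)) (K i)).prod) m}

/-- `C₂(M) = span{ a_(-j|J) m : j ≥ 2 }`. -/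
def NWModule.C2M {W : NWSusyVA 𝕜 N V} (Ms : NWModule 𝕜 N V M W) : Submodule 𝕜 M :=
  Submodule.span 𝕜 {x : M | ∃ (a : V) (j : ℕ) (J : Finset (Fin N)) (m : M),
    2 ≤ j ∧ x = Ms.amode a (-(j : ℤ)) J m}

/-- `C₂(M) = span{ a_(-j|J) m : j ≥ 2 }`. -/
def NKModule.C2M {W : NKSusyVA 𝕜 N V} (Ms : NKModule 𝕜 N V M W) : Submodule 𝕜 M :=
  Submodule.span 𝕜 {x : M | ∃ (a : V) (j : ℕ) (J : Finset (Fin N)) (m : M),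
    2 ≤ j ∧ x = Ms.amode a (-(j : ℤ)) J m}

end ModDefs
section Structures2
variable (𝕜 : Type) [Field 𝕜] [CharZero 𝕜] (N : ℕ)
variable (V : Type) [AddCommGroup V] [Module 𝕜 V]
/-- An `N_W = N` SUSY vertex Lie algebra: the data of the nonnegative Fourier modes
`a_(j|J)` (`j ≥ 0`) of a "singular part" state-superfield correspondence `Y₋`,
satisfying translation invariance, skew-symmetry (in the expanded mode form
involving `e^{Z∇}` with `Z∇ = zT + ∑ ζ^i S^i`) and the supercommutator axiom
(in the equivalent mode form of the SUSY commutator formula). -/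
structure NWSusyVLA : Type where
  gr : ZMod 2 → Submodule 𝕜 V
  decomp : DirectSum.Decomposition gr
  T : Module.End 𝕜 V
  S : Fin N → Module.End 𝕜 V
  lmode : V →ₗ[𝕜] ℕ → Finset (Fin N) → Module.End 𝕜 V
  lmode_trunc : ∀ (a v : V), ∃ n : ℕ, ∀ j : ℕ, n ≤ j → ∀ J, lmode a j J v = 0
  T_even : ∀ (p : ZMod 2), ∀ x ∈ gr p, T x ∈ gr p
  S_odd : ∀ (i : Fin N) (p : ZMod 2), ∀ x ∈ gr p, S i x ∈ gr (p + 1)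
  lmode_parity : ∀ (pa pv : ZMod 2) (a v : V) (j : ℕ) (J : Finset (Fin N)),
    a ∈ gr pa → v ∈ gr pv →
    lmode a j J v ∈ gr (pa + pv + (N : ZMod 2) + (J.card : ZMod 2))
  transl_T : ∀ (a : V) (j : ℕ) (J : Finset (Fin N)),
    lmode (T a) j J = (-(j : ℤ)) • lmode a (j - 1) J
  transl_S : ∀ (i : Fin N) (a : V) (j : ℕ) (J : Finset (Fin N)),
    lmode (S i a) j J = ssgn {i} (Finset.univ \ J) • lmode a j (J.erase i)
  skew : ∀ (pa pb : ZMod 2) (a b : V), a ∈ gr pa → b ∈ gr pb →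
    ∀ (j : ℕ) (J : Finset (Fin N)),
    lmode a j J b
      = ((sg (pa * pb) : ℤ) : 𝕜) •
          ∑ᶠ l : ℕ, ∑ L ∈ (Finset.univ \ J).powerset,
            (((sg (((L.card.choose 2 : ℕ) : ZMod 2) + 1 + (j : ZMod 2) + (l : ZMod 2)
                   + (N : ZMod 2) + ((J ∪ L).card : ZMod 2)
                   + (L.card : ZMod 2) * ((N : ZMod 2) + ((J ∪ L).card : ZMod 2)))
                * ssgn L ((Finset.univ \ J) \ L) : ℤ) : 𝕜)
              * (l.factorial : 𝕜)⁻¹) •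
            ((T ^ l * sProd S L) (lmode b (j + l) (J ∪ L) a))
  commutator : ∀ (pa pb : ZMod 2) (a b : V), a ∈ gr pa → b ∈ gr pb →
    ∀ (l m : ℕ) (L M' : Finset (Fin N)) (v : V),
    lmode a l L (lmode b m M' v)
        - sg ((pa + (N : ZMod 2) + (L.card : ZMod 2)) *
              (pb + (N : ZMod 2) + (M'.card : ZMod 2))) •
            lmode b m M' (lmode a l L v)
      = ∑ j ∈ Finset.range (l + 1), ∑ J : Finset (Fin N),
          if L ∩ M' ⊆ J then
            (((sg ((pa + (N : ZMod 2) + (L.card : ZMod 2)) *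
                     ((N : ZMod 2) + (M'.card : ZMod 2))
                   + ((L.card : ZMod 2) + (J.card : ZMod 2)) *
                     ((N : ZMod 2) + (J.card : ZMod 2)))
                * (ssgn J (Finset.univ \ J) * ssgn L (Finset.univ \ L) * ssgn J (L \ J)
                    * ssgn (L \ J) ((Finset.univ \ M') \ (L \ J))) : ℤ) : 𝕜)
              * (l.choose j : 𝕜)) •
            lmode (lmode a j J b) (l + m - j) (M' ∪ (L \ J)) v
          else 0

/-- An `N_K = N` SUSY vertex Lie algebra. -/
structure NKSusyVLA : Type where
  gr : ZMod 2 → Submodule 𝕜 V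
  decomp : DirectSum.Decomposition gr
  SK : Fin N → Module.End 𝕜 V
  T : Module.End 𝕜 V
  T_sq : ∀ i : Fin N, SK i * SK i = T
  lmode : V →ₗ[𝕜] ℕ → Finset (Fin N) → Module.End 𝕜 V
  lmode_trunc : ∀ (a v : V), ∃ n : ℕ, ∀ j : ℕ, n ≤ j → ∀ J, lmode a j J v = 0
  SK_odd : ∀ (i : Fin N) (p : ZMod 2), ∀ x ∈ gr p, SK i x ∈ gr (p + 1)
  lmode_parity : ∀ (pa pv : ZMod 2) (a v : V) (j : ℕ) (J : Finset (Fin N)),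
    a ∈ gr pa → v ∈ gr pv →
    lmode a j J v ∈ gr (pa + pv + (N : ZMod 2) + (J.card : ZMod 2))
  transl_SK : ∀ (i : Fin N) (a : V) (j : ℕ) (J : Finset (Fin N)),
    lmode (SK i a) j J
      = if i ∈ J then ssgn (Finset.univ \ J) {i} • lmode a j (J.erase i)
        else (-(j : ℤ) * ssgn (Finset.univ \ insert i J) {i}) • lmode a (j - 1) (insert i J)
  skew : ∀ (pa pb : ZMod 2) (a b : V), a ∈ gr pa → b ∈ gr pb →
    ∀ (j : ℕ) (J : Finset (Fin N)),
    lmode a j J b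
      = ((sg (pa * pb) : ℤ) : 𝕜) •
          ∑ᶠ l : ℕ, ∑ L ∈ (Finset.univ \ J).powerset,
            (((sg (((L.card.choose 2 : ℕ) : ZMod 2) + 1 + (j : ZMod 2) + (l : ZMod 2)
                   + (N : ZMod 2) + ((J ∪ L).card : ZMod 2)
                   + (L.card : ZMod 2) * ((N : ZMod 2) + ((J ∪ L).card : ZMod 2)))
                * ssgn L ((Finset.univ \ J) \ L) : ℤ) : 𝕜)
              * (l.factorial : 𝕜)⁻¹) •
            ((T ^ l * sProd SK L) (lmode b (j + l) (J ∪ L) a))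
  commutator : ∀ (pa pb : ZMod 2) (a b : V), a ∈ gr pa → b ∈ gr pb →
    ∀ (l m : ℕ) (L M' : Finset (Fin N)) (v : V),
    lmode a l L (lmode b m M' v)
        - sg ((pa + (N : ZMod 2) + (L.card : ZMod 2)) *
              (pb + (N : ZMod 2) + (M'.card : ZMod 2))) •
            lmode b m M' (lmode a l L v)
      = ∑ j ∈ Finset.range (l + 1), ∑ J : Finset (Fin N),
          if M' ∩ ((J \ L) ∪ (L \ J)) = ∅ then
            (((sg ((pa + (N : ZMod 2) + (L.card : ZMod 2)) *
                     ((N : ZMod 2) + (M'.card : ZMod 2))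
                   + (J.card : ZMod 2) * ((N : ZMod 2) + (L.card : ZMod 2))
                   + (L.card : ZMod 2) * (N : ZMod 2)
                   + (((J ∩ L).card.choose 2 : ℕ) : ZMod 2)
                   + (((J.card + 1).choose 2 : ℕ) : ZMod 2))
                * (ssgn ((J \ L) ∪ (L \ J))
                      (Finset.univ \ (M' ∪ (J \ L) ∪ (L \ J)))
                    * ssgn J (Finset.univ \ J) * ssgn L (Finset.univ \ L)
                    * ssgn (J \ L) (J ∩ L) * ssgn (J ∩ L) (L \ J)
                    * ssgn (J \ L) (L \ J)) : ℤ) : 𝕜)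
              * ((∏ i ∈ Finset.range (j + (J \ L).card), ((l : 𝕜) - (i : 𝕜)))
                  / (j.factorial : 𝕜))) •
            lmode (lmode a j J b) (l + m - j - (J \ L).card) (M' ∪ (J \ L) ∪ (L \ J)) v
          else 0

/-- An `N_W = N` SUSY vertex Poisson algebra: a commutative `N_W = N` SUSY vertex
algebra together with an `N_W = N` SUSY vertex Lie algebra structure with the same
grading and operators `T`, `S^i`, such that the vertex Lie modes act as
super-derivations of the commutative product `b ⋅ c = b_(-1|[N]) c`. -/
structure NWSusyVPA : Type where
  toVA : NWSusyVA 𝕜 N V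
  commVA : toVA.IsCommutative
  toVLA : NWSusyVLA 𝕜 N V
  gr_eq : toVLA.gr = toVA.gr
  T_eq : toVLA.T = toVA.T
  S_eq : toVLA.S = toVA.S
  leibniz : ∀ (pa pb : ZMod 2) (a b : V), a ∈ toVA.gr pa → b ∈ toVA.gr pb →
    ∀ (j : ℕ) (J : Finset (Fin N)) (c : V),
      toVLA.lmode a j J (toVA.mode b (-1) Finset.univ c)
        = toVA.mode (toVLA.lmode a j J b) (-1) Finset.univ c
          + sg ((pa + (J.card : ZMod 2)) * pb) •
              toVA.mode b (-1) Finset.univ (toVLA.lmode a j J c)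

/-- An `N_K = N` SUSY vertex Poisson algebra. -/
structure NKSusyVPA : Type where
  toVA : NKSusyVA 𝕜 N V
  commVA : toVA.IsCommutative
  toVLA : NKSusyVLA 𝕜 N V
  gr_eq : toVLA.gr = toVA.gr
  SK_eq : toVLA.SK = toVA.SK
  leibniz : ∀ (pa pb : ZMod 2) (a b : V), a ∈ toVA.gr pa → b ∈ toVA.gr pb →
    ∀ (j : ℕ) (J : Finset (Fin N)) (c : V),
      toVLA.lmode a j J (toVA.mode b (-1) Finset.univ c)
        = toVA.mode (toVLA.lmode a j J b) (-1) Finset.univ c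
          + sg ((pa + (J.card : ZMod 2)) * pb) •
              toVA.mode b (-1) Finset.univ (toVLA.lmode a j J c)
end Structures2


section LiFilLemmas

variable {𝕜 : Type} [Field 𝕜] [CharZero 𝕜] {N : ℕ}
variable {V : Type} [AddCommGroup V] [Module 𝕜 V]
variable {M : Type} [AddCommGroup M] [Module 𝕜 M]
variable {W : NKSusyVA 𝕜 N V} (Ms : NKModule 𝕜 N V M W)

lemma liFil_antitone {m n : ℤ} (h : m ≤ n) : Ms.liFil n ≤ Ms.liFil m := by
  apply Submodule.span_mono
  rintro x ⟨r, a, k, K, b, hs, hx⟩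
  exact ⟨r, a, k, K, b, le_trans h hs, hx⟩

lemma liFil_top {n : ℤ} (h : n ≤ 0) (x : M) : x ∈ Ms.liFil n := by
  refine Submodule.subset_span ⟨0, fun _ => W.vac, fun _ => 0, fun _ => Finset.univ, x, ?_, ?_⟩
  · simpa using h
  · simp [Ms.vac_act]

lemma liFil_prepend (a : V) (k : ℕ) (K : Finset (Fin N)) {n : ℤ} {x : M}
    (hx : x ∈ Ms.liFil n) : Ms.amode a (-1 - (k : ℤ)) K x ∈ Ms.liFil (n + k) := by
  induction hx using Submodule.span_induction with
  | mem x hx =>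
    obtain ⟨r, af, kf, Kf, m, hs, rfl⟩ := hx
    refine Submodule.subset_span
      ⟨r + 1, Fin.cons a af, Fin.cons k kf, Fin.cons K Kf, m, ?_, ?_⟩
    · rw [show ((Fin.cons k kf : Fin (r+2) → ℕ) : Fin (r+2) → ℕ) = Fin.cons k kf from rfl]
      have hc : ∑ i : Fin (r + 2), ((Fin.cons k kf : Fin (r+2) → ℕ) i : ℤ)
          = (k : ℤ) + ∑ i : Fin (r + 1), (kf i : ℤ) := by
        rw [← Fin.sum_cons (k : ℤ) (fun i => (kf i : ℤ))]
        exact Finset.sum_congr rfl (fun i _ => by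
          refine Fin.cases ?_ (fun j => ?_) i <;> simp)
      rw [hc]
      linarith
    · simp only [List.ofFn_succ, List.prod_cons, Fin.cons_zero, Fin.cons_succ,
        Module.End.mul_apply]
  | zero => simpa using Submodule.zero_mem _
  | add x y hx hy ihx ihy => rw [map_add]; exact add_mem ihx ihy
  | smul c x hx ihx => rw [map_smul]; exact Submodule.smul_mem _ _ ihx

lemma liFil_key (l k : ℕ) (K L : Finset (Fin N)) (s : ℤ) (y : M) (b a : V)
    (IH : ∀ l' : ℕ, l' < l → ∀ (a' : V) (n : ℤ) (L' : Finset (Fin N)) (x : M),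
      x ∈ Ms.liFil n → Ms.amode a' (l' : ℤ) L' x ∈ Ms.liFil (n - l'))
    (hy : y ∈ Ms.liFil s)
    (hy2 : ∀ (a' : V) (L' : Finset (Fin N)),
      Ms.amode a' (l : ℤ) L' y ∈ Ms.liFil (s - l)) :
    Ms.amode a (l : ℤ) L (Ms.amode b (-1 - (k : ℤ)) K y) ∈ Ms.liFil (s + k - l) := by
  haveI := W.decomp
  have htop : ∀ v : V, v ∈ ⨆ p : ZMod 2, W.gr p := by
    intro v
    rw [DirectSum.IsInternal.submodule_iSup_eq_top (DirectSum.Decomposition.isInternal W.gr)]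
    trivial
  refine Submodule.iSup_induction W.gr
    (motive := fun w => Ms.amode a (l : ℤ) L (Ms.amode w (-1 - (k : ℤ)) K y)
      ∈ Ms.liFil (s + k - l)) (htop b) (fun pb b hb => ?_) ?_ ?_
  · show Ms.amode a (l : ℤ) L (Ms.amode b (-1 - (k : ℤ)) K y) ∈ Ms.liFil (s + k - l)
    refine Submodule.iSup_induction W.gr
      (motive := fun v => Ms.amode v (l : ℤ) L (Ms.amode b (-1 - (k : ℤ)) K y)
        ∈ Ms.liFil (s + k - l)) (htop a) (fun pa a ha => ?_) ?_ ?_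
    · show Ms.amode a (l : ℤ) L (Ms.amode b (-1 - (k : ℤ)) K y) ∈ Ms.liFil (s + k - l)
      have h := Ms.comm_formula pa pb a b ha hb (l : ℤ) (-1 - (k : ℤ)) L K y
      rw [sub_eq_iff_eq_add] at h
      rw [h]
      refine add_mem ?_ (zsmul_mem ?_ _)
      · refine finsum_induction _ (Submodule.zero_mem _)
          (fun u v hu hv => add_mem hu hv) (fun j => ?_)
        refine Submodule.sum_mem _ (fun J _ => ?_)
        split_ifs with hJ
        · refine Submodule.smul_mem _ _ ?_
          by_cases hle : l ≤ k + j + (J \ L).card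
          · have hidx : (l : ℤ) + (-1 - (k : ℤ)) - (j : ℤ) - ((J \ L).card : ℤ)
                = -1 - ((k + j + (J \ L).card - l : ℕ) : ℤ) := by omega
            rw [hidx]
            exact liFil_antitone Ms (by omega)
              (liFil_prepend Ms (W.mode a (j : ℤ) J b) (k + j + (J \ L).card - l) _ hy)
          · push_neg at hle
            have hidx : (l : ℤ) + (-1 - (k : ℤ)) - (j : ℤ) - ((J \ L).card : ℤ)
                = ((l - (k + j + (J \ L).card + 1) : ℕ) : ℤ) := by omega
            rw [hidx]
            exact liFil_antitone Ms (by omega)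
              (IH (l - (k + j + (J \ L).card + 1)) (by omega)
                (W.mode a (j : ℤ) J b) s _ y hy)
        · exact Submodule.zero_mem _
      · have hrw : s + (k : ℤ) - (l : ℤ) = s - l + k := by ring
        rw [hrw]
        exact liFil_prepend Ms b k K (hy2 a L)
    · show Ms.amode (0 : V) (l : ℤ) L _ ∈ _
      simp only [map_zero, Pi.zero_apply, LinearMap.zero_apply]
      exact Submodule.zero_mem _
    · intro u v hu hv
      show Ms.amode (u + v) (l : ℤ) L _ ∈ _
      simp only [map_add, Pi.add_apply, LinearMap.add_apply]
      exact add_mem hu hv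
  · show Ms.amode a (l : ℤ) L (Ms.amode (0 : V) (-1 - (k : ℤ)) K y) ∈ _
    simp only [map_zero, Pi.zero_apply, LinearMap.zero_apply, map_zero]
    exact Submodule.zero_mem _
  · intro u v hu hv
    show Ms.amode a (l : ℤ) L (Ms.amode (u + v) (-1 - (k : ℤ)) K y) ∈ _
    simp only [map_add, Pi.add_apply, LinearMap.add_apply, map_add]
    exact add_mem hu hv

lemma liFil_aux (l : ℕ)
    (IH : ∀ l' : ℕ, l' < l → ∀ (a : V) (n : ℤ) (L : Finset (Fin N)) (x : M),
      x ∈ Ms.liFil n → Ms.amode a (l' : ℤ) L x ∈ Ms.liFil (n - l')) :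
    ∀ (r : ℕ) (af : Fin (r + 1) → V) (kf : Fin (r + 1) → ℕ)
      (Kf : Fin (r + 1) → Finset (Fin N)) (m : M) (n : ℤ),
      n ≤ ∑ i, (kf i : ℤ) →
      ∀ (a : V) (L : Finset (Fin N)),
        Ms.amode a (l : ℤ) L
          (((List.ofFn fun i => Ms.amode (af i) (-1 - (kf i : ℤ)) (Kf i)).prod) m)
          ∈ Ms.liFil (n - l) := by
  intro r
  induction r with
  | zero =>
    intro af kf Kf m n hs a L
    have hprod : ((List.ofFn fun i : Fin 1 =>
        Ms.amode (af i) (-1 - (kf i : ℤ)) (Kf i)).prod) m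
        = Ms.amode (af 0) (-1 - (kf 0 : ℤ)) (Kf 0) m := by
      simp
    rw [hprod]
    have hs0 : n ≤ (kf 0 : ℤ) := by simpa using hs
    have h := liFil_key Ms l (kf 0) (Kf 0) L (n - kf 0) m (af 0) a IH
      (liFil_top Ms (by omega) m) (fun a' L' => liFil_top Ms (by omega) _)
    exact liFil_antitone Ms (by omega) h
  | succ r ih =>
    intro af kf Kf m n hs a L
    have hprod : ((List.ofFn fun i : Fin (r + 2) =>
        Ms.amode (af i) (-1 - (kf i : ℤ)) (Kf i)).prod) m
        = Ms.amode (af 0) (-1 - (kf 0 : ℤ)) (Kf 0)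
            (((List.ofFn fun i : Fin (r + 1) =>
              Ms.amode (af i.succ) (-1 - (kf i.succ : ℤ)) (Kf i.succ)).prod) m) := by
      rw [List.ofFn_succ, List.prod_cons]
      rfl
    rw [hprod]
    have hsum : n ≤ (kf 0 : ℤ) + ∑ i : Fin (r + 1), (kf i.succ : ℤ) := by
      rwa [Fin.sum_univ_succ (fun i => (kf i : ℤ))] at hs
    have hsum' : n - kf 0 ≤ ∑ i : Fin (r + 1), (kf i.succ : ℤ) := by linarith
    have hy : (((List.ofFn fun i : Fin (r + 1) =>
        Ms.amode (af i.succ) (-1 - (kf i.succ : ℤ)) (Kf i.succ)).prod) m)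
        ∈ Ms.liFil (n - kf 0) :=
      Submodule.subset_span ⟨r, fun i => af i.succ, fun i => kf i.succ,
        fun i => Kf i.succ, m, hsum', rfl⟩
    have hy2 : ∀ (a' : V) (L' : Finset (Fin N)),
        Ms.amode a' (l : ℤ) L'
          (((List.ofFn fun i : Fin (r + 1) =>
            Ms.amode (af i.succ) (-1 - (kf i.succ : ℤ)) (Kf i.succ)).prod) m)
          ∈ Ms.liFil (n - kf 0 - l) :=
      fun a' L' => ih (fun i => af i.succ) (fun i => kf i.succ)
        (fun i => Kf i.succ) m (n - kf 0) hsum' a' L'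
    have h := liFil_key Ms l (kf 0) (Kf 0) L (n - kf 0) _ (af 0) a IH hy hy2
    exact liFil_antitone Ms (by omega) h

lemma liFil_main : ∀ (l : ℕ) (a : V) (n : ℤ) (L : Finset (Fin N)) (x : M),
    x ∈ Ms.liFil n → Ms.amode a (l : ℤ) L x ∈ Ms.liFil (n - l) := by
  intro l
  induction l using Nat.strong_induction_on with
  | _ l IH =>
  intro a n L x hx
  induction hx using Submodule.span_induction with
  | mem x hxs =>
    obtain ⟨r, af, kf, Kf, m, hs, rfl⟩ := hxs
    exact liFil_aux Ms l IH r af kf Kf m n hs a L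
  | zero => simpa using Submodule.zero_mem _
  | add x y hx hy ihx ihy => rw [map_add]; exact add_mem ihx ihy
  | smul c x hx ihx => rw [map_smul]; exact Submodule.smul_mem _ _ ihx

end LiFilLemmas

/-- **Modes shift the Li filtration of a module, `N_K = N` case:**
`a_(l|L) E n (M) ⊆ E (n-l-1) (M)` for all `l ∈ ℤ`, and moreover
`a_(l|L) E n (M) ⊆ E (n-l) (M)` when `l ≥ 0`. -/
theorem NK_mode_shifts_liFil
    (𝕜 : Type) [Field 𝕜] [CharZero 𝕜] (N : ℕ) (hN : 0 < N)
    (V : Type) [AddCommGroup V] [Module 𝕜 V]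
    (M : Type) [AddCommGroup M] [Module 𝕜 M]
    (W : NKSusyVA 𝕜 N V) (Ms : NKModule 𝕜 N V M W) :
    (∀ (a : V) (l n : ℤ) (L : Finset (Fin N)) (x : M),
      x ∈ Ms.liFil n → Ms.amode a l L x ∈ Ms.liFil (n - l - 1)) ∧
    (∀ (a : V) (l n : ℤ) (L : Finset (Fin N)), 0 ≤ l → ∀ x : M,
      x ∈ Ms.liFil n → Ms.amode a l L x ∈ Ms.liFil (n - l)) := by
  constructor
  · intro a l n L x hx
    rcases le_or_gt 0 l with h | h
    · have hl : l = (l.toNat : ℤ) := (Int.toNat_of_nonneg h).symm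
      rw [hl]
      exact liFil_antitone Ms (by omega) (liFil_main Ms l.toNat a n L x hx)
    · have hl : l = -1 - (((-1 - l).toNat : ℕ) : ℤ) := by omega
      rw [hl]
      exact liFil_antitone Ms (by omega) (liFil_prepend Ms a (-1 - l).toNat L hx)
  · intro a l n L hl x hx
    have h : l = (l.toNat : ℤ) := (Int.toNat_of_nonneg hl).symm
    rw [h]
    exact liFil_main Ms l.toNat a n L x hx

end SUSY
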